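/- arXiv:math/0512335 — 3 statements merged into one kernel-verified Lean document; each statement's English description precedes it below -/
import Mathlib

section
/- Let n be a positive integer and let f : ℝⁿ → ℝⁿ be a real analytic open map. If f is not a local homeomorphism at a point p ∈ ℝⁿ (i.e., p belongs to the branch set B of f), then the rank of the derivative df_p is at most n − 2. In other words, B ⊆ R_{n−2}. -/
/-!
If `rank df_p ≥ n - 1`, write the target as `ℝⁿ⁻¹ × ℝ` so that the first component of `df_p`
is onto, and complete that component by a linear functional to an invertible derivative: by the
inverse function theorem this gives a chart around `p` in which `f` reads
`(y, t) ↦ (y, k (y, t))`. If `k (y, s) = k (y, t)` with `s < t`, then `k (y, ·)` attains an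
extremum inside `(s, t)`, so its image of `(s, t)` is not open; but that image is the slice at
`y` of the open set `f (V × (s, t))`, `V` an open neighbourhood of `y`. Hence `f` is injective
near `p`, and a continuous open map that is injective on an open set is a homeomorphism of it
onto its image.
-/

open Set Metric Module Function Filter Topology

theorem not_isOpen_image_Ioo_of_eq {k : ℝ → ℝ} {s t : ℝ} (hst : s < t)
    (hk : ContinuousOn k (Icc s t)) (he : k s = k t) : ¬ IsOpen (k '' Ioo s t) := by
  intro ho
  have hne : (Icc s t).Nonempty := nonempty_Icc.2 hst.le
  obtain ⟨c, hc, hmax⟩ := isCompact_Icc.exists_isMaxOn hne hk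
  obtain ⟨c', hc', hmin⟩ := isCompact_Icc.exists_isMinOn hne hk
  have himage : k '' Ioo s t ⊆ Ioo (k c') (k c) := by
    rw [← interior_Icc (a := k c'), ho.subset_interior_iff]
    exact image_subset_iff.2 fun x hx =>
      ⟨hmin (Ioo_subset_Icc_self hx), hmax (Ioo_subset_Icc_self hx)⟩
  have hend : ∀ x ∈ Icc s t, k x ∈ Ioo (k c') (k c) ∨ k x = k s := by
    intro x hx
    rcases eq_endpoints_or_mem_Ioo_of_mem_Icc hx with rfl | rfl | hx
    · exact .inr rfl
    · exact .inr he.symm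
    · exact .inl (himage (mem_image_of_mem k hx))
  have hmid : k ((s + t) / 2) ∈ Ioo (k c') (k c) :=
    himage (mem_image_of_mem k ⟨by linarith, by linarith⟩)
  rcases hend c hc with h | hc_end
  · exact lt_irrefl _ h.2
  rcases hend c' hc' with h | hc'_end
  · exact lt_irrefl _ h.1
  exact (hmid.1.trans hmid.2).ne (hc'_end.trans hc_end.symm)

theorem injOn_prod_of_fst_eq {Y : Type*} [TopologicalSpace Y] {g : Y × ℝ → Y × ℝ} {V : Set Y}
    {I : Set ℝ} (hV : IsOpen V) (hI : I.OrdConnected) (hc : ContinuousOn g (V ×ˢ I))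
    (hfst : ∀ q ∈ V ×ˢ I, (g q).1 = q.1)
    (hopen : ∀ W ⊆ V ×ˢ I, IsOpen W → IsOpen (g '' W)) : InjOn g (V ×ˢ I) := by
  have key : ∀ y ∈ V, ∀ s ∈ I, ∀ t ∈ I, s < t → g (y, s) ≠ g (y, t) := by
    intro y hy s hs t ht hst heq
    have hIcc : Icc s t ⊆ I := hI.out hs ht
    have hW : V ×ˢ Ioo s t ⊆ V ×ˢ I := prod_mono_right (Ioo_subset_Icc_self.trans hIcc)
    have hslice : (fun z => (y, z)) ⁻¹' (g '' (V ×ˢ Ioo s t)) =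
        (fun τ => (g (y, τ)).2) '' Ioo s t := by
      ext z
      constructor
      · rintro ⟨⟨y', τ⟩, hq, hgq⟩
        obtain rfl : y' = y := (hfst _ (hW hq)).symm.trans (congrArg Prod.fst hgq)
        exact ⟨τ, hq.2, congrArg Prod.snd hgq⟩
      · rintro ⟨τ, hτ, rfl⟩
        exact ⟨(y, τ), ⟨hy, hτ⟩, Prod.ext (hfst _ (hW ⟨hy, hτ⟩)) rfl⟩
    refine not_isOpen_image_Ioo_of_eq (k := fun τ => (g (y, τ)).2) hst ?_
      (congrArg Prod.snd heq) ?_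
    · exact continuous_snd.comp_continuousOn
        (hc.comp (Continuous.continuousOn (by fun_prop)) fun τ hτ => ⟨hy, hIcc hτ⟩)
    · rw [← hslice]
      exact (hopen _ hW (hV.prod isOpen_Ioo)).preimage (by fun_prop)
  rintro ⟨y, s⟩ hq ⟨y', t⟩ hq' heq
  obtain rfl : y = y' := by simpa [hfst _ hq, hfst _ hq'] using congrArg Prod.fst heq
  rcases lt_trichotomy s t with h | rfl | h
  · exact (key y hq.1 s hq.2 t hq'.2 h heq).elim
  · rfl
  · exact (key y hq.1 t hq'.2 s hq.2 h heq.symm).elim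

namespace LinearMap

variable {K E F : Type*} [Field K] [AddCommGroup E] [Module K E] [AddCommGroup F] [Module K F]

theorem exists_comp_surjective_of_le_finrank_range [FiniteDimensional K F] (T : E →ₗ[K] F)
    {m : ℕ} (hm : m ≤ finrank K (range T)) :
    ∃ A : F →ₗ[K] (Fin m → K), Surjective (A ∘ₗ T) := by
  obtain ⟨v, hv⟩ := exists_linearIndependent_of_le_finrank hm
  let ι := (range T).subtype ∘ₗ Fintype.linearCombination K v
  obtain ⟨A, hA⟩ := ι.exists_leftInverse_of_injective <| ker_eq_bot.2 <|
    (range T).injective_subtype.comp hv.fintypeLinearCombination_injective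
  refine ⟨A, fun y => ?_⟩
  obtain ⟨x, hx⟩ := (Fintype.linearCombination K v y).2
  refine ⟨x, ?_⟩
  rw [comp_apply, hx]
  exact LinearMap.congr_fun hA y

theorem exists_prod_bijective_of_surjective [FiniteDimensional K E] [FiniteDimensional K F]
    {S : E →ₗ[K] F} (hS : Surjective S) (hdim : finrank K E = finrank K F + 1) :
    ∃ ℓ : E →ₗ[K] K, Bijective (S.prod ℓ) := by
  have hker : finrank K (ker S) = finrank K K := by
    have := S.finrank_range_add_finrank_ker
    rw [range_eq_top.2 hS, finrank_top] at this
    rw [finrank_self]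
    omega
  obtain ⟨C, hC⟩ := (ker S).exists_isCompl
  let ℓ := (LinearEquiv.ofFinrankEq _ _ hker).toLinearMap ∘ₗ (ker S).projectionOnto C hC
  have hinj : Injective (S.prod ℓ) := by
    rw [← ker_eq_bot, Submodule.eq_bot_iff]
    intro x hx
    have hxS : x ∈ ker S := congrArg Prod.fst hx
    have hxℓ : ℓ x = 0 := congrArg Prod.snd hx
    simp only [ℓ, comp_apply, Submodule.projectionOnto_apply_of_mem_left hC hxS,
      LinearEquiv.coe_coe, LinearEquiv.map_eq_zero_iff] at hxℓ
    simpa using congrArg Subtype.val hxℓ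
  refine ⟨ℓ, hinj, (injective_iff_surjective_of_finrank_eq_finrank ?_).1 hinj⟩
  rw [finrank_prod, finrank_self, hdim]

end LinearMap

theorem IsOpenMap.isLocalHomeomorphOn_of_injOn {X Y : Type*} [TopologicalSpace X]
    [TopologicalSpace Y] {f : X → Y} (hopen : IsOpenMap f) (hc : Continuous f) {s : Set X}
    (hinj : ∀ x ∈ s, ∃ U ∈ 𝓝 x, InjOn f U) : IsLocalHomeomorphOn f s := by
  refine (isLocalHomeomorphOn_iff_isOpenEmbedding_restrict s).2 fun x hx => ?_
  obtain ⟨U, hU, hUinj⟩ := hinj x hx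
  obtain ⟨V, hVU, hV, hxV⟩ := mem_nhds_iff.1 hU
  exact ⟨V, hV.mem_nhds hxV, .of_continuous_injective_isOpenMap
    (hc.comp continuous_subtype_val) (injOn_iff_injective.1 (hUinj.mono hVU))
    (hopen.domRestrict hV)⟩

section

variable {E : Type*} [NormedAddCommGroup E] [NormedSpace ℝ E] [FiniteDimensional ℝ E]

theorem IsOpenMap.injOn_nhds_of_fst_comp_surjective {Y : Type*} [NormedAddCommGroup Y]
    [NormedSpace ℝ Y] [FiniteDimensional ℝ Y] {f : E → Y × ℝ} (hopen : IsOpenMap f)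
    (hc : Continuous f) {T : E →L[ℝ] Y × ℝ} {p : E} (hT : HasStrictFDerivAt f T p)
    (hsurj : Surjective (ContinuousLinearMap.fst ℝ Y ℝ ∘L T))
    (hdim : finrank ℝ E = finrank ℝ Y + 1) : ∃ U ∈ 𝓝 p, InjOn f U := by
  obtain ⟨ℓ, hℓ⟩ := LinearMap.exists_prod_bijective_of_surjective hsurj hdim
  let Φ : E ≃L[ℝ] Y × ℝ := (LinearEquiv.ofBijective _ hℓ).toContinuousLinearEquiv
  let φ : E → Y × ℝ := fun x => ((f x).1, ℓ x)
  have hφ : HasStrictFDerivAt φ (Φ : E →L[ℝ] Y × ℝ) p :=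
    ((ContinuousLinearMap.fst ℝ Y ℝ).hasStrictFDerivAt.comp p hT).prodMk
      (LinearMap.toContinuousLinearMap ℓ).hasStrictFDerivAt
  set e := hφ.toOpenPartialHomeomorph φ
  obtain ⟨r, hr, hball⟩ :=
    Metric.isOpen_iff.1 e.open_target (φ p) hφ.image_mem_toOpenPartialHomeomorph_target
  rw [← ball_prod_same] at hball
  -- in the chart `e`, `f` keeps the first coordinate
  have hg : InjOn (f ∘ e.symm) (ball (φ p).1 r ×ˢ ball (φ p).2 r) := by
    refine injOn_prod_of_fst_eq isOpen_ball ?_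
      ((hc.comp_continuousOn e.continuousOn_symm).mono hball)
      (fun q hq => (congrArg Prod.fst (e.right_inv (hball hq)) : (φ (e.symm q)).1 = q.1))
      fun W hW hWo => ?_
    · rw [Real.ball_eq_Ioo]
      exact ordConnected_Ioo
    · rw [image_comp]
      exact hopen _ (e.isOpen_image_symm_of_subset_target hWo (hW.trans hball))
  refine ⟨e.source ∩ e ⁻¹' (ball (φ p).1 r ×ˢ ball (φ p).2 r),
    (e.isOpen_inter_preimage (isOpen_ball.prod isOpen_ball)).mem_nhds
      ⟨hφ.mem_toOpenPartialHomeomorph_source, mem_ball_self hr, mem_ball_self hr⟩,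
    fun x hx y hy hxy => ?_⟩
  refine e.injOn hx.1 hy.1 (hg hx.2 hy.2 ?_)
  simp only [comp_apply, e.left_inv hx.1, e.left_inv hy.1, hxy]

theorem IsOpenMap.injOn_nhds_of_finrank_le_finrank_range_add_one {F : Type*}
    [NormedAddCommGroup F] [NormedSpace ℝ F] [FiniteDimensional ℝ F] {f : E → F}
    (hopen : IsOpenMap f) (hc : Continuous f) {T : E →L[ℝ] F} {p : E}
    (hT : HasStrictFDerivAt f T p) (hdim : finrank ℝ E = finrank ℝ F)
    (hrank : finrank ℝ F ≤ finrank ℝ (LinearMap.range (T : E →ₗ[ℝ] F)) + 1) :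
    ∃ U ∈ 𝓝 p, InjOn f U := by
  rcases hm : finrank ℝ F with _ | m
  · have : Subsingleton E := finrank_zero_iff.1 (hdim.trans hm)
    exact ⟨univ, univ_mem, injective_of_subsingleton f |>.injOn⟩
  obtain ⟨A, hA⟩ :=
    (T : E →ₗ[ℝ] F).exists_comp_surjective_of_le_finrank_range (m := m) (by omega)
  obtain ⟨ℓ, hψ⟩ := A.exists_prod_bijective_of_surjective (hA.of_comp (g := T)) (by simp [hm])
  let ψ : F ≃L[ℝ] (Fin m → ℝ) × ℝ := (LinearEquiv.ofBijective _ hψ).toContinuousLinearEquiv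
  have hψf : HasStrictFDerivAt (ψ ∘ f) ((ψ : F →L[ℝ] _).comp T) p :=
    ψ.hasStrictFDerivAt.comp p hT
  obtain ⟨U, hU, hinj⟩ := (ψ.isOpenMap.comp hopen).injOn_nhds_of_fst_comp_surjective
    (ψ.continuous.comp hc) hψf hA (by simp [hdim, hm])
  exact ⟨U, hU, hinj.of_comp⟩

end

theorem branch_set_subset_rank_le_sub_two_general
    {n : ℕ}
    (f : EuclideanSpace ℝ (Fin n) → EuclideanSpace ℝ (Fin n))
    (hf : ∀ p, AnalyticAt ℝ f p) (hopen : IsOpenMap f)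
    (p : EuclideanSpace ℝ (Fin n)) (hp : ¬ IsLocalHomeomorphOn f {p}) :
    (Module.finrank ℝ (LinearMap.range (fderiv ℝ f p : EuclideanSpace ℝ (Fin n) →ₗ[ℝ] EuclideanSpace ℝ (Fin n))) : ℤ) ≤ (n : ℤ) - 2 := by
  have hc : Continuous f := continuous_iff_continuousAt.2 fun x => (hf x).continuousAt
  by_contra! hrank
  refine hp (hopen.isLocalHomeomorphOn_of_injOn hc ?_)
  rintro x rfl
  exact hopen.injOn_nhds_of_finrank_le_finrank_range_add_one hc (hf x).hasStrictFDerivAt rfl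
    (by rw [finrank_euclideanSpace_fin]; omega)

/-- **Theorem B(iii) (Hirsch).** For a real analytic open map `f : ℝⁿ → ℝⁿ`,
the branch set is contained in `R_{n-2}`: at any point `p` where `f` is not a
local homeomorphism, the rank of the derivative `df_p` is at most `n - 2`. -/
theorem branch_set_subset_rank_le_sub_two
    {n : ℕ} (hn : 0 < n)
    (f : EuclideanSpace ℝ (Fin n) → EuclideanSpace ℝ (Fin n))
    (hf : ∀ p, AnalyticAt ℝ f p) (hopen : IsOpenMap f)
    (p : EuclideanSpace ℝ (Fin n)) (hp : ¬ IsLocalHomeomorphOn f {p}) :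
    (Module.finrank ℝ (LinearMap.range (fderiv ℝ f p : EuclideanSpace ℝ (Fin n) →ₗ[ℝ] EuclideanSpace ℝ (Fin n))) : ℤ) ≤ (n : ℤ) - 2 :=
  branch_set_subset_rank_le_sub_two_general f hf hopen p hp
end

section
/- (Church) Let n ≥ 1 and let g : ℝⁿ → ℝⁿ be a map of class Cⁿ which is open and whose derivative has rank at least n − 1 at every point (i.e., rank(dg_p) ≥ n − 1 for all p ∈ ℝⁿ). Then g is a local homeomorphism: every point of ℝⁿ has an open neighborhood on which g restricts to a homeomorphism onto an open subset of ℝⁿ. -/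
open Set Filter Topology Module Function

/-!
Split the target as `ℝ × K` along a line `ℝ w` that together with the range of `dg_p` spans
everything (possible because the rank is at least `n - 1`). For a suitable functional `ℓ`, the map
`φ x = (ℓ x, (g x)₂)` has invertible derivative at `p`, so it is a chart near `p`, and in this
chart `g` becomes fibre-preserving over `K`: `(s, v) ↦ (h_v s, v)`. Each slice `h_v` is a
continuous map of an interval to `ℝ` that is open, since `g` is; if it took some value twice it
would have an interior local extremum by Rolle's theorem, which an open map cannot have. So every
slice, hence `g`, is injective near `p`, and a continuous open locally injective map is a local
homeomorphism.
-/

theorem nhds_le_map_of_isOpen_image {X Y : Type*} [TopologicalSpace X] [TopologicalSpace Y]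
    {f : X → Y} {s : Set X} {x : X} (hs : s ∈ 𝓝 x)
    (ho : ∀ u ⊆ s, IsOpen u → IsOpen (f '' u)) : 𝓝 (f x) ≤ map f (𝓝 x) := by
  refine le_map fun v hv => ?_
  obtain ⟨u, hus, hu, hxu⟩ := mem_nhds_iff.1 (inter_mem hv hs)
  exact mem_of_superset
    ((ho u (hus.trans inter_subset_right) hu).mem_nhds (mem_image_of_mem f hxu))
    (image_mono (hus.trans inter_subset_left))

theorem Set.OrdConnected.injOn_of_isOpen_image {f : ℝ → ℝ} {s : Set ℝ} (hs : s.OrdConnected)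
    (hf : ContinuousOn f s) (ho : ∀ u ⊆ s, IsOpen u → IsOpen (f '' u)) : InjOn f s := by
  suffices ∀ x ∈ s, ∀ y ∈ s, x < y → f x ≠ f y by
    intro x hx y hy hxy
    by_contra hne
    rcases lt_or_gt_of_ne hne with h | h
    exacts [this x hx y hy h hxy, this y hy x hx h hxy.symm]
  intro x hx y hy hxy hfxy
  obtain ⟨c, hc, hextr⟩ := exists_isLocalExtr_Ioo hxy (hf.mono (hs.out hx hy)) hfxy
  have hsc : s ∈ 𝓝 c :=
    mem_of_superset (Ioo_mem_nhds hc.1 hc.2) (Ioo_subset_Icc_self.trans (hs.out hx hy))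
  refine (isLocalExtrOn_univ_iff.2 hextr).not_nhds_le_map ?_
  rw [nhdsWithin_univ]
  exact nhds_le_map_of_isOpen_image hsc ho

theorem Set.OrdConnected.injOn_prod_of_snd_eq {X : Type*} [TopologicalSpace X]
    {Ψ : ℝ × X → ℝ × X} {t : Set ℝ} {s : Set X} (ht : t.OrdConnected) (hs : IsOpen s)
    (hsnd : ∀ z ∈ t ×ˢ s, (Ψ z).2 = z.2) (hc : ContinuousOn Ψ (t ×ˢ s))
    (ho : ∀ u ⊆ t ×ˢ s, IsOpen u → IsOpen (Ψ '' u)) : InjOn Ψ (t ×ˢ s) := by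
  rintro ⟨a, x⟩ ⟨ha, hx⟩ ⟨b, x'⟩ ⟨hb, hx'⟩ hΨ
  obtain rfl : x = x' :=
    (hsnd _ ⟨ha, hx⟩).symm.trans ((congrArg Prod.snd hΨ).trans (hsnd _ ⟨hb, hx'⟩))
  have hmaps : MapsTo (fun r => (r, x)) t (t ×ˢ s) := fun r hr => ⟨hr, hx⟩
  have hslice : InjOn (fun r => (Ψ (r, x)).1) t := by
    refine ht.injOn_of_isOpen_image (continuous_fst.comp_continuousOn
      (hc.comp (Continuous.prodMk_left x).continuousOn hmaps)) fun u hut hu => ?_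
    have himage : (fun r => (Ψ (r, x)).1) '' u = (fun r => (r, x)) ⁻¹' (Ψ '' (u ×ˢ s)) := by
      ext r
      constructor
      · rintro ⟨r', hr', rfl⟩
        exact ⟨(r', x), ⟨hr', hx⟩, Prod.ext rfl (hsnd _ (hmaps (hut hr')))⟩
      · rintro ⟨⟨r', y⟩, ⟨hr', hy⟩, hΨr⟩
        obtain rfl : y = x := (hsnd _ ⟨hut hr', hy⟩).symm.trans (congrArg Prod.snd hΨr)
        exact ⟨r', hr', congrArg Prod.fst hΨr⟩
    rw [himage]
    exact (ho _ (prod_mono hut le_rfl) (hu.prod hs)).preimage (Continuous.prodMk_left x)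
  exact Prod.ext (hslice ha hb (congrArg Prod.fst hΨ)) rfl

theorem IsLocallyInjective.isLocalHomeomorph {X Y : Type*} [TopologicalSpace X]
    [TopologicalSpace Y] {f : X → Y} (hi : IsLocallyInjective f) (hc : Continuous f)
    (ho : IsOpenMap f) : IsLocalHomeomorph f := by
  refine isLocalHomeomorph_iff_isOpenEmbedding_restrict.2 fun x => ?_
  obtain ⟨U, hU, hxU, hinj⟩ := hi x
  exact ⟨U, hU.mem_nhds hxU, .of_continuous_injective_isOpenMap (hc.comp continuous_subtype_val)
    hinj.injective (ho.domRestrict hU)⟩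

theorem ContinuousLinearMap.exists_injective_prod_of_surjective {𝕜 E K : Type*} [RCLike 𝕜]
    [NormedAddCommGroup E] [NormedSpace 𝕜 E] [FiniteDimensional 𝕜 E]
    [NormedAddCommGroup K] [NormedSpace 𝕜 K] [FiniteDimensional 𝕜 K]
    {B : E →L[𝕜] K} (hB : Surjective B) (hdim : finrank 𝕜 E = finrank 𝕜 K + 1) :
    ∃ ℓ : E →L[𝕜] 𝕜, Injective (ℓ.prod B) := by
  have hker : finrank 𝕜 B.ker = 1 := by
    have := LinearMap.finrank_range_add_finrank_ker (B : E →ₗ[𝕜] K)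
    rw [LinearMap.range_eq_top.2 hB, finrank_top] at this
    omega
  have : Nontrivial B.ker := Module.nontrivial_of_finrank_eq_succ hker
  obtain ⟨u, hu⟩ := exists_ne (0 : B.ker)
  obtain ⟨ℓ, hℓ⟩ := SeparatingDual.exists_ne_zero (R := 𝕜) (x := (u : E)) (by simpa using hu)
  refine ⟨ℓ, (injective_iff_map_eq_zero _).2 fun x hx => ?_⟩
  obtain ⟨c, hc⟩ := (finrank_eq_one_iff_of_nonzero' u hu).1 hker ⟨x, congrArg Prod.snd hx⟩
  have hx' : x = c • (u : E) := by simpa using (congrArg Subtype.val hc).symm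
  have : c * ℓ u = 0 := by simpa [hx'] using congrArg Prod.fst hx
  simp [hx', (mul_eq_zero.1 this).resolve_right hℓ]

theorem Submodule.exists_ne_zero_sup_span_singleton_eq_top {K V : Type*} [DivisionRing K]
    [AddCommGroup V] [Module K V] [FiniteDimensional K V] [Nontrivial V] (R : Submodule K V)
    (hR : finrank K V ≤ finrank K R + 1) : ∃ w ≠ 0, R ⊔ K ∙ w = ⊤ := by
  by_cases htop : R = ⊤
  · obtain ⟨w, hw⟩ := exists_ne (0 : V)
    exact ⟨w, hw, by simp [htop]⟩
  obtain ⟨w, -, hwR⟩ := SetLike.exists_of_lt (lt_top_iff_ne_top.2 htop)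
  refine ⟨w, fun hw => hwR (hw ▸ R.zero_mem), Submodule.eq_top_of_finrank_eq (le_antisymm
    (Submodule.finrank_le _) ?_)⟩
  have : finrank K R < finrank K ↥(R ⊔ K ∙ w) :=
    Submodule.finrank_lt_finrank_of_lt
      (left_lt_sup.2 fun h => hwR (h (Submodule.mem_span_singleton_self w)))
  omega

theorem ContinuousLinearMap.surjective_projKerOfRightInverse_comp {𝕜 E F : Type*} [Ring 𝕜]
    [TopologicalSpace 𝕜] [TopologicalSpace E] [AddCommGroup E] [Module 𝕜 E]
    [TopologicalSpace F] [AddCommGroup F] [Module 𝕜 F] [IsTopologicalAddGroup F]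
    [ContinuousMul 𝕜] [ContinuousSMul 𝕜 F]
    (A : E →L[𝕜] F) {ω : F →L[𝕜] 𝕜} {w : F} (h : RightInverse (toSpanSingleton 𝕜 w) ω)
    (hA : LinearMap.range (A : E →ₗ[𝕜] F) ⊔ 𝕜 ∙ w = ⊤) :
    Surjective ((ω.projKerOfRightInverse _ h).comp A) := by
  intro k
  obtain ⟨_, ⟨x, rfl⟩, v, hv, hk⟩ :=
    Submodule.mem_sup.1 (hA ▸ Submodule.mem_top (x := (k : F)))
  obtain ⟨c, rfl⟩ := Submodule.mem_span_singleton.1 hv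
  have hw : ω.projKerOfRightInverse _ h (c • w) = 0 := ω.projKerOfRightInverse_comp_inv _ h c
  refine ⟨x, ?_⟩
  rw [ContinuousLinearMap.comp_apply, ← ω.projKerOfRightInverse_apply_idem _ h k, ← hk, map_add,
    hw, add_zero]
  rfl

theorem HasStrictFDerivAt.exists_openPartialHomeomorph_of_injective {𝕜 E F : Type*}
    [NontriviallyNormedField 𝕜] [CompleteSpace 𝕜]
    [NormedAddCommGroup E] [NormedSpace 𝕜 E] [FiniteDimensional 𝕜 E]
    [NormedAddCommGroup F] [NormedSpace 𝕜 F] [FiniteDimensional 𝕜 F]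
    {f : E → F} {T : E →L[𝕜] F} {p : E} (hf : HasStrictFDerivAt f T p)
    (hT : Injective T) (hdim : finrank 𝕜 E = finrank 𝕜 F) :
    ∃ φ : OpenPartialHomeomorph E F, ⇑φ = f ∧ p ∈ φ.source := by
  have : CompleteSpace E := FiniteDimensional.complete 𝕜 E
  let e : E ≃L[𝕜] F :=
    (LinearMap.linearEquivOfInjective (T : E →ₗ[𝕜] F) hT hdim).toContinuousLinearEquiv
  have hfe : HasStrictFDerivAt f (e : E →L[𝕜] F) p := hf
  exact ⟨hfe.toOpenPartialHomeomorph f, rfl, hfe.mem_toOpenPartialHomeomorph_source⟩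

theorem exists_mem_nhds_injOn_of_surjective_snd {E K : Type*}
    [NormedAddCommGroup E] [NormedSpace ℝ E] [FiniteDimensional ℝ E]
    [NormedAddCommGroup K] [NormedSpace ℝ K] [FiniteDimensional ℝ K]
    {g : E → ℝ × K} {A : E →L[ℝ] ℝ × K} {p : E} (hg : Continuous g) (hopen : IsOpenMap g)
    (hA : HasStrictFDerivAt g A p) (hsurj : Surjective ((ContinuousLinearMap.snd ℝ ℝ K).comp A))
    (hdim : finrank ℝ E = finrank ℝ K + 1) : ∃ U ∈ 𝓝 p, InjOn g U := by
  obtain ⟨ℓ, hℓ⟩ := ContinuousLinearMap.exists_injective_prod_of_surjective hsurj hdim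
  have hchart : HasStrictFDerivAt (fun x => (ℓ x, (g x).2))
      (ℓ.prod ((ContinuousLinearMap.snd ℝ ℝ K).comp A)) p :=
    ℓ.hasStrictFDerivAt.prodMk hA.snd
  obtain ⟨φ, hφg, hpφ⟩ := hchart.exists_openPartialHomeomorph_of_injective hℓ
    (by rw [finrank_prod, finrank_self, hdim, add_comm])
  obtain ⟨ε, hε, hball⟩ := Metric.isOpen_iff.1 φ.open_target (φ p) (φ.map_source hpφ)
  set t := Metric.ball (φ p).1 ε
  set s := Metric.ball (φ p).2 ε
  have ht : t.OrdConnected := by simp only [t, Real.ball_eq_Ioo]; exact ordConnected_Ioo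
  have hts : t ×ˢ s ⊆ φ.target := by rw [ball_prod_same]; exact hball
  have hsnd : ∀ z ∈ t ×ˢ s, (g (φ.symm z)).2 = z.2 := fun z hz => by
    simpa [hφg] using congrArg Prod.snd (φ.right_inv (hts hz))
  have hΨ : InjOn (g ∘ φ.symm) (t ×ˢ s) := by
    refine ht.injOn_prod_of_snd_eq Metric.isOpen_ball hsnd
      (hg.comp_continuousOn (φ.continuousOn_symm.mono hts)) fun u hu huo => ?_
    rw [image_comp]
    exact hopen _ (φ.isOpen_image_symm_of_subset_target huo (hu.trans hts))
  refine ⟨φ.source ∩ φ ⁻¹' (t ×ˢ s),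
    (φ.isOpen_inter_preimage (Metric.isOpen_ball.prod Metric.isOpen_ball)).mem_nhds
      ⟨hpφ, Metric.mem_ball_self hε, Metric.mem_ball_self hε⟩, fun x hx y hy hxy => ?_⟩
  refine φ.injOn hx.1 hy.1 (hΨ hx.2 hy.2 ?_)
  simp only [comp_apply, φ.left_inv hx.1, φ.left_inv hy.1, hxy]

theorem exists_mem_nhds_injOn_of_finrank_le_finrank_range_add_one {E F : Type*}
    [NormedAddCommGroup E] [NormedSpace ℝ E] [FiniteDimensional ℝ E]
    [NormedAddCommGroup F] [NormedSpace ℝ F] [FiniteDimensional ℝ F] [Nontrivial F]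
    {g : E → F} {A : E →L[ℝ] F} {p : E} (hg : Continuous g) (hopen : IsOpenMap g)
    (hA : HasStrictFDerivAt g A p) (hdim : finrank ℝ E = finrank ℝ F)
    (hrank : finrank ℝ F ≤ finrank ℝ (LinearMap.range (A : E →ₗ[ℝ] F)) + 1) :
    ∃ U ∈ 𝓝 p, InjOn g U := by
  obtain ⟨w, hw0, hw⟩ :=
    (LinearMap.range (A : E →ₗ[ℝ] F)).exists_ne_zero_sup_span_singleton_eq_top hrank
  obtain ⟨ω, hω⟩ := SeparatingDual.exists_eq_one (R := ℝ) hw0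
  have h : RightInverse (ContinuousLinearMap.toSpanSingleton ℝ w) ω := fun c => by simp [hω]
  let Λ := ContinuousLinearEquiv.equivOfRightInverse ω _ h
  obtain ⟨U, hU, hinj⟩ := exists_mem_nhds_injOn_of_surjective_snd (Λ.continuous.comp hg)
    (Λ.toHomeomorph.isOpenMap.comp hopen) ((Λ : F →L[ℝ] ℝ × ω.ker).hasStrictFDerivAt.comp p hA)
    (A.surjective_projKerOfRightInverse_comp h hw)
    (by rw [hdim, Λ.toLinearEquiv.finrank_eq, finrank_prod, finrank_self, add_comm])
  exact ⟨U, hU, fun x hx y hy hxy => hinj hx hy (congrArg Λ hxy)⟩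

/-- **Theorem (Church, 1.4).** If `g : ℝⁿ → ℝⁿ` is `Cⁿ` and open with rank
at least `n - 1` at every point, then `g` is a local homeomorphism. -/
theorem church_rank_ge_sub_one_local_homeomorph
    {n : ℕ} (hn : 1 ≤ n)
    (g : EuclideanSpace ℝ (Fin n) → EuclideanSpace ℝ (Fin n))
    (hg : ContDiff ℝ n g) (hopen : IsOpenMap g)
    (hrank : ∀ p, n - 1 ≤ Module.finrank ℝ (LinearMap.range (fderiv ℝ g p).toLinearMap)) :
    IsLocalHomeomorph g := by
  have : Nontrivial (EuclideanSpace ℝ (Fin n)) :=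
    Module.nontrivial_of_finrank_pos (by rw [finrank_euclideanSpace_fin]; omega)
  refine IsLocallyInjective.isLocalHomeomorph (isLocallyInjective_iff_nhds.2 fun p => ?_)
    hg.continuous hopen
  exact exists_mem_nhds_injOn_of_finrank_le_finrank_range_add_one hg.continuous hopen
    (hg.contDiffAt.hasStrictFDerivAt (by norm_cast; omega)) rfl
    (by rw [finrank_euclideanSpace_fin]; have := hrank p; omega)
end

section
/- Let n ≥ 1 and let f : ℝⁿ → ℝⁿ = ℝ^{n−1} × ℝ be a real analytic open map such that f_i(y, 0) = 0 for all y ∈ ℝ^{n−1} and all indices i with k + 1 ≤ i ≤ n (where 0 ≤ k ≤ n − 1 and f_1, …, f_n are the components of f). Then there is a dense open set Λ ⊆ ℝ^{n−1} such that for every y ∈ Λ, the analytic function t ↦ f_n(y, t) is not constant on any nonempty open interval of ℝ. -/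
/-- Key claim in the proof of Lemma 4 (Hirsch): if `f : ℝ^{n-1} × ℝ → ℝⁿ` is a
real analytic open map whose components `f_i` with `k + 1 ≤ i ≤ n`
(1-indexed; `k ≤ (i : ℕ)` 0-indexed) vanish on the hyperplane `t = 0`, then
there is a dense open set `Λ ⊆ ℝ^{n-1}` such that for every `y ∈ Λ` the
analytic function `t ↦ f_n (y, t)` is not constant on any nonempty open
interval. -/
theorem dense_open_set_of_nonconstant_last_component
    {n : ℕ} (hn : 1 ≤ n)
    (f : EuclideanSpace ℝ (Fin (n - 1)) × ℝ → EuclideanSpace ℝ (Fin n))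
    (hf : ∀ p, AnalyticAt ℝ f p) (hopen : IsOpenMap f)
    (k : ℕ) (hk : k ≤ n - 1)
    (hvanish : ∀ y : EuclideanSpace ℝ (Fin (n - 1)), ∀ i : Fin n,
      k ≤ (i : ℕ) → f (y, 0) i = 0) :
    ∃ Λ : Set (EuclideanSpace ℝ (Fin (n - 1))), IsOpen Λ ∧ Dense Λ ∧
      ∀ y ∈ Λ, ∀ a b : ℝ, a < b →
        ¬ ∃ c : ℝ, ∀ t ∈ Set.Ioo a b, f (y, t) ⟨n - 1, by omega⟩ = c := by
  have hn1 : n - 1 < n := by omega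
  set i₀ : Fin n := ⟨n - 1, hn1⟩ with hi₀
  -- the proj functional
  have hcont : Continuous f := continuous_iff_continuousAt.2 fun p => (hf p).continuousAt
  set B : Set (EuclideanSpace ℝ (Fin (n - 1))) := {y | ∀ t : ℝ, f (y, t) i₀ = 0} with hB
  have hBclosed : IsClosed B := by
    have : B = ⋂ t : ℝ, {y | f (y, t) i₀ = 0} := by
      ext y; simp [hB, Set.mem_iInter]
    rw [this]
    refine isClosed_iInter fun t => isClosed_eq ?_ continuous_const
    exact (EuclideanSpace.proj i₀).continuous.comp
      (hcont.comp (Continuous.prodMk_left t))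
  -- B has empty interior
  have hint : interior B = ∅ := by
    by_contra h
    obtain ⟨y₀, hy₀⟩ := Set.nonempty_iff_ne_empty.2 h
    have hV : IsOpen (f '' (interior B ×ˢ (Set.univ : Set ℝ))) :=
      hopen _ (isOpen_interior.prod isOpen_univ)
    have hpV : f (y₀, 0) ∈ f '' (interior B ×ˢ Set.univ) :=
      ⟨(y₀, 0), ⟨hy₀, Set.mem_univ _⟩, rfl⟩
    obtain ⟨r, hr, hball⟩ := Metric.isOpen_iff.1 hV _ hpV
    set p := f (y₀, 0)
    set q : EuclideanSpace ℝ (Fin n) := p + (r / 2) • EuclideanSpace.single i₀ 1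
    have hq : q ∈ Metric.ball p r := by
      have : dist q p = r / 2 := by
        simp only [q, dist_eq_norm, add_sub_cancel_left, norm_smul,
          EuclideanSpace.norm_single, norm_one, mul_one, Real.norm_eq_abs,
          abs_of_pos (by linarith : (0:ℝ) < r / 2)]
      rw [Metric.mem_ball, this]; linarith
    obtain ⟨⟨y, t⟩, ⟨hyB, -⟩, hfq⟩ := hball hq
    have hq0 : q i₀ = 0 := by
      rw [← hfq]; exact interior_subset hyB t
    have hp0 : p i₀ = 0 := interior_subset hy₀ 0
    have : q i₀ = r / 2 := by
      simp only [q, PiLp.add_apply, PiLp.smul_apply, EuclideanSpace.single_apply,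
        if_pos rfl, smul_eq_mul, mul_one, hp0, zero_add, if_true]
    rw [hq0] at this; linarith
  refine ⟨Bᶜ, hBclosed.isOpen_compl, ?_, ?_⟩
  · rwa [interior_eq_empty_iff_dense_compl] at hint
  · rintro y hy a b hab ⟨c, hc⟩
    -- the function t ↦ f (y, t) i₀ is analytic on ℝ
    have hg : ∀ t : ℝ, AnalyticAt ℝ (fun t : ℝ => f (y, t) i₀) t := by
      intro t
      have h1 : AnalyticAt ℝ (fun t : ℝ => (y, t)) t :=
        analyticAt_const.prod analyticAt_id
      exact ((EuclideanSpace.proj i₀).analyticAt _).comp ((hf _).comp h1)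
    have hgOn : AnalyticOnNhd ℝ (fun t : ℝ => f (y, t) i₀) Set.univ := fun t _ => hg t
    have hconstOn : AnalyticOnNhd ℝ (fun _ : ℝ => c) Set.univ := fun t _ => analyticAt_const
    have hmid : (a + b) / 2 ∈ Set.Ioo a b := ⟨by linarith, by linarith⟩
    have hev : (fun t : ℝ => f (y, t) i₀) =ᶠ[nhds ((a + b) / 2)] fun _ => c :=
      Filter.eventuallyEq_of_mem (isOpen_Ioo.mem_nhds hmid) hc
    have heq := AnalyticOnNhd.eq_of_eventuallyEq hgOn hconstOn hev
    have hall : ∀ t : ℝ, f (y, t) i₀ = c := fun t => congrFun heq t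
    have hc0 : c = 0 := by
      have := hall 0
      rw [hvanish y i₀ (by simp [hi₀]; omega)] at this
      exact this.symm
    exact hy fun t => by rw [hall t, hc0]
end
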